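/- For every non-negative integer n and integer t, ∑_{k=0}^{n} (-1)^{n-k}·C(n+k, n-k)·L_{2k+t} equals L_t if n ≡ 0 (mod 5); equals L_{t+1} if n ≡ 1 (mod 5); equals 0 if n ≡ 2 (mod 5); equals -L_{t+1} if n ≡ 3 (mod 5); and equals -L_t if n ≡ 4 (mod 5). -/

import Mathlib

open Finset Real

/-- Fibonacci numbers extended to integer indices. -/
def fibZ (n : ℤ) : ℤ :=
  if 0 ≤ n then (Nat.fib n.toNat : ℤ)
  else (-1) ^ ((-n).toNat + 1) * (Nat.fib (-n).toNat : ℤ)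

/-- Lucas numbers on natural indices. -/
def lucasNat : ℕ → ℤ
  | 0 => 2
  | 1 => 1
  | n + 2 => lucasNat (n + 1) + lucasNat n

/-- Lucas numbers extended to integer indices. -/
def lucasZ (n : ℤ) : ℤ :=
  if 0 ≤ n then lucasNat n.toNat
  else (-1) ^ (-n).toNat * lucasNat (-n).toNat

noncomputable def gold : ℝ := (1 + Real.sqrt 5) / 2
noncomputable def gold' : ℝ := (1 - Real.sqrt 5) / 2

/-! Let `E` be the shift `u ↦ u (· + 1)` on sequences `u : ℤ → G` with
`u (m + 2) = u (m + 1) + u m`. The sum is `(Pₙ(E²) u) t` for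
`Pₙ(X) = ∑ₖ (-1)^(n+k) C(n+k, 2k) Xᵏ`, and Pascal's rule gives `Pₙ₊₂ = (X - 2) Pₙ₊₁ - Pₙ`.
On such sequences `E² - 2 = E - 1`, so `Pₙ(E²)` runs through `1, E, 0, -E, -1` with period
five. -/

lemma lucasZ_natCast (p : ℕ) : lucasZ p = lucasNat p := by
  simp [lucasZ]

lemma lucasZ_neg_natCast (p : ℕ) : lucasZ (-p) = (-1) ^ p * lucasNat p := by
  rcases p with _ | p
  · rfl
  · rw [lucasZ, if_neg (by omega)]
    simp

lemma Nat.choose_add_two_add_choose (m j : ℕ) :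
    (m + 2).choose (j + 2) + m.choose (j + 2) = m.choose j + 2 * (m + 1).choose (j + 2) := by
  simp only [Nat.choose_succ_succ']
  ring

-- `C(n + k, 2k)` rather than `C(n + k, n - k)`: it vanishes for `k > n`, where the truncated
-- `n - k` would give `C(n + k, 0) = 1`.
def altChoose (n k : ℕ) : ℤ := (-1) ^ (n + k) * (n + k).choose (2 * k)

lemma altChoose_of_lt {n k : ℕ} (h : n < k) : altChoose n k = 0 := by
  simp [altChoose, Nat.choose_eq_zero_of_lt (by omega : n + k < 2 * k)]

lemma altChoose_of_le {n k : ℕ} (h : k ≤ n) :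
    altChoose n k = (-1) ^ (n - k) * (n + k).choose (n - k) := by
  have hsplit : n + k = (n - k) + 2 * k := by omega
  rw [altChoose, Nat.choose_symm_of_eq_add hsplit, hsplit, pow_add, pow_mul]
  simp

lemma altChoose_add_two_zero (n : ℕ) :
    altChoose (n + 2) 0 + 2 * altChoose (n + 1) 0 + altChoose n 0 = 0 := by
  simp only [altChoose, add_zero, mul_zero, Nat.choose_zero_right, pow_succ]
  ring

lemma altChoose_add_two_succ (n k : ℕ) :
    altChoose (n + 2) (k + 1) + 2 * altChoose (n + 1) (k + 1) + altChoose n (k + 1) =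
      altChoose (n + 1) k := by
  have hpascal : ((n + k + 1 + 2).choose (2 * k + 2) : ℤ) + (n + k + 1).choose (2 * k + 2) =
      (n + k + 1).choose (2 * k) + 2 * (n + k + 1 + 1).choose (2 * k + 2) := by
    exact_mod_cast Nat.choose_add_two_add_choose (n + k + 1) (2 * k)
  rw [altChoose, altChoose, altChoose, altChoose, show n + 2 + (k + 1) = n + k + 1 + 2 by omega,
    show n + 1 + (k + 1) = n + k + 1 + 1 by omega, show n + (k + 1) = n + k + 1 by omega,
    show 2 * (k + 1) = 2 * k + 2 by omega, show n + 1 + k = n + k + 1 by omega]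
  simp only [pow_succ]
  linear_combination -(-1 : ℤ) ^ (n + k) * hpascal

section altChooseSum

variable {G : Type*} [AddCommGroup G]

def IsFibLike (u : ℤ → G) : Prop :=
  ∀ m, u (m + 2) = u (m + 1) + u m

def altChooseSum (u : ℤ → G) (n : ℕ) (t : ℤ) : G :=
  ∑ k ∈ range (n + 1), altChoose n k • u (2 * k + t)

lemma altChooseSum_eq_sum_range (u : ℤ → G) {n N : ℕ} (h : n < N) (t : ℤ) :
    altChooseSum u n t = ∑ k ∈ range N, altChoose n k • u (2 * k + t) := by
  refine sum_subset (range_subset_range.2 h) fun k _ hk => ?_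
  rw [altChoose_of_lt (by simpa using hk), zero_smul]

lemma altChooseSum_add_two (u : ℤ → G) (n : ℕ) (t : ℤ) :
    altChooseSum u (n + 2) t + 2 • altChooseSum u (n + 1) t + altChooseSum u n t =
      altChooseSum u (n + 1) (t + 2) := by
  rw [altChooseSum_eq_sum_range u (n := n + 2) (N := n + 3) (by omega),
    altChooseSum_eq_sum_range u (n := n + 1) (N := n + 3) (by omega),
    altChooseSum_eq_sum_range u (n := n) (N := n + 3) (by omega), smul_sum,
    ← sum_add_distrib, ← sum_add_distrib, sum_range_succ']
  have hcollect (a b c : ℤ) (x : G) : a • x + 2 • b • x + c • x = (a + 2 * b + c) • x := by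
    module
  simp only [hcollect, altChoose_add_two_zero, altChoose_add_two_succ, zero_smul, add_zero]
  refine sum_congr rfl fun k _ => ?_
  congr 2
  push_cast
  ring

lemma isFibLike_altChooseSum {u : ℤ → G} (hu : IsFibLike u) (n : ℕ) :
    IsFibLike (altChooseSum u n) := by
  intro t
  simp only [altChooseSum, ← sum_add_distrib, ← smul_add]
  refine sum_congr rfl fun k _ => ?_
  rw [show 2 * (k : ℤ) + (t + 2) = 2 * k + t + 2 by omega,
    show 2 * (k : ℤ) + (t + 1) = 2 * k + t + 1 by omega, hu]

lemma IsFibLike.altChooseSum_add_two {u : ℤ → G} (hu : IsFibLike u) (n : ℕ) (t : ℤ) :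
    altChooseSum u (n + 2) t =
      altChooseSum u (n + 1) (t + 1) - altChooseSum u (n + 1) t - altChooseSum u n t := by
  have hrec := _root_.altChooseSum_add_two u n t
  rw [isFibLike_altChooseSum hu (n + 1) t] at hrec
  linear_combination (norm := module) hrec

def fiveCycle (u : ℤ → G) (n : ℕ) (t : ℤ) : G :=
  if n % 5 = 0 then u t
  else if n % 5 = 1 then u (t + 1)
  else if n % 5 = 2 then 0
  else if n % 5 = 3 then -u (t + 1)
  else -u t

lemma IsFibLike.fiveCycle_add_two {u : ℤ → G} (hu : IsFibLike u) (n : ℕ) (t : ℤ) :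
    fiveCycle u (n + 2) t =
      fiveCycle u (n + 1) (t + 1) - fiveCycle u (n + 1) t - fiveCycle u n t := by
  have hu' : u (t + 1 + 1) = u (t + 1) + u t := by rw [add_assoc, one_add_one_eq_two, hu]
  have hmod : n % 5 = 0 ∨ n % 5 = 1 ∨ n % 5 = 2 ∨ n % 5 = 3 ∨ n % 5 = 4 := by omega
  rcases hmod with h | h | h | h | h <;>
    simp only [fiveCycle, Nat.add_mod n 2, Nat.add_mod n 1, h] <;> norm_num <;>
    simp only [hu'] <;> abel

theorem IsFibLike.altChooseSum_eq_fiveCycle {u : ℤ → G} (hu : IsFibLike u) (n : ℕ) (t : ℤ) :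
    altChooseSum u n t = fiveCycle u n t := by
  induction n using Nat.twoStepInduction generalizing t with
  | zero => simp [altChooseSum, altChoose, fiveCycle]
  | one =>
    simp [altChooseSum, altChoose, fiveCycle, sum_range_succ, add_comm 2 t, hu t]
  | more n ih₀ ih₁ =>
    rw [hu.altChooseSum_add_two, hu.fiveCycle_add_two, ih₀, ih₁, ih₁]

end altChooseSum

lemma isFibLike_lucasZ : IsFibLike lucasZ := by
  intro m
  obtain ⟨p, rfl | rfl⟩ := Int.eq_nat_or_neg m
  · exact_mod_cast lucasZ_natCast (p + 2)
  · rcases p with _ | _ | q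
    · rfl
    · rfl
    · have h₂ : -((q + 2 : ℕ) : ℤ) + 2 = -q := by push_cast; ring
      have h₁ : -((q + 2 : ℕ) : ℤ) + 1 = -(q + 1 : ℕ) := by push_cast; ring
      rw [h₂, h₁, lucasZ_neg_natCast, lucasZ_neg_natCast, lucasZ_neg_natCast]
      simp only [lucasNat, pow_succ]
      ring

theorem stmt19 (n : ℕ) (t : ℤ) :
    ∑ k ∈ Finset.range (n + 1),
        (-1 : ℤ) ^ (n - k) * (Nat.choose (n + k) (n - k) : ℤ) * lucasZ (2 * k + t) =
      if n % 5 = 0 then lucasZ t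
      else if n % 5 = 1 then lucasZ (t + 1)
      else if n % 5 = 2 then 0
      else if n % 5 = 3 then -lucasZ (t + 1)
      else -lucasZ t := by
  have hsum : ∑ k ∈ Finset.range (n + 1),
      (-1 : ℤ) ^ (n - k) * (Nat.choose (n + k) (n - k) : ℤ) * lucasZ (2 * k + t) =
        altChooseSum lucasZ n t :=
    sum_congr rfl fun k hk => by
      rw [altChoose_of_le (Nat.lt_succ_iff.mp (mem_range.mp hk)), smul_eq_mul]
  rw [hsum, isFibLike_lucasZ.altChooseSum_eq_fiveCycle]
  rfl
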